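/- Let p be a prime. For every cyclic subgroup C of order p of Sym(ℤ/pℤ) and every function φ : ℤ/pℤ → ℤ/pℤ∖{0}, the set S_{(C,φ)} = {(f, f′) ∈ H : f ∈ C and f′(x) = φ(f(x))/φ(x) for all x ∈ ℤ/pℤ} is a Sylow p-subgroup of H; every Sylow p-subgroup of H equals S_{(C,φ)} for some such pair; and S_{(C,φ)} = S_{(D,ψ)} if and only if C = D and φ = k·ψ for some nonzero constant k ∈ ℤ/pℤ. Consequently the Sylow p-subgroups of H are in bijective correspondence with pairs (C, φ̄), where C is a cyclic subgroup of Sym(ℤ/pℤ) of order p and φ̄ is the class of φ : ℤ/pℤ → ℤ/pℤ∖{0} under multiplication by nonzero constants. -/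

import Mathlib

/-! The map `f ↦ (f, φ ∘ f / φ)` is an injective homomorphism `Sym(ℤ/pℤ) → H`, a section of the
projection `H → Sym(ℤ/pℤ)`, and `S_{(C,φ)}` is the image of `C` under it; so it is a subgroup of
order `p`, hence a Sylow subgroup because `p` divides `|H| = p! (p-1)^p` exactly once. Conjugation
by `(σ, χ)` carries `S_{(C,φ)}` to `S_{(σCσ⁻¹, (χφ) ∘ σ⁻¹)}`, so by Sylow's conjugacy theorem
every Sylow subgroup is of this form. Finally `S_{(C,φ)}` determines `C` as its projection, and
if `S_{(C,φ)} = S_{(C,ψ)}` then `φ / ψ` is invariant under `C`, which is transitive on `ℤ/pℤ`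
because it is generated by a `p`-cycle. -/

/-- The group `H`: pairs `(f, f')` with `f` a permutation of `ℤ/pℤ` and
`f' : ℤ/pℤ → ℤ/pℤ∖{0}` an arbitrary function (encoded as taking values in the
units `(ℤ/pℤ)ˣ`), with multiplication `(f,f')∘(g,g') = (f∘g, (f'∘g)·g')`. -/
@[ext]
structure Hgrp (p : ℕ) where
  perm : Equiv.Perm (ZMod p)
  der : ZMod p → (ZMod p)ˣ

namespace Hgrp

instance (p : ℕ) : Group (Hgrp p) where
  mul a b := ⟨a.perm * b.perm, fun x => a.der (b.perm x) * b.der x⟩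
  one := ⟨1, 1⟩
  inv a := ⟨a.perm⁻¹, fun x => (a.der (a.perm⁻¹ x))⁻¹⟩
  mul_assoc a b c := by
    refine Hgrp.ext (mul_assoc _ _ _) ?_
    funext x
    exact mul_assoc _ _ _
  one_mul a := by
    refine Hgrp.ext (one_mul _) ?_
    funext x
    exact one_mul _
  mul_one a := by
    refine Hgrp.ext (mul_one _) ?_
    funext x
    exact mul_one _
  inv_mul_cancel a := by
    refine Hgrp.ext (inv_mul_cancel _) ?_
    funext x
    show (a.der (a.perm⁻¹ (a.perm x)))⁻¹ * a.der x = 1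
    rw [Equiv.Perm.inv_eq_iff_eq.mpr rfl, inv_mul_cancel]

theorem mul_def {p : ℕ} (a b : Hgrp p) :
    a * b = ⟨a.perm * b.perm, fun x => a.der (b.perm x) * b.der x⟩ := rfl

theorem one_def {p : ℕ} : (1 : Hgrp p) = ⟨1, 1⟩ := rfl

end Hgrp

/-- The subset `S_{(C,φ)} = {(f, f') ∈ H : f ∈ C, f'(x) = φ(f(x))/φ(x)}` of `H`. -/
def sylowCandidate (p : ℕ) (C : Subgroup (Equiv.Perm (ZMod p)))
    (φ : ZMod p → (ZMod p)ˣ) : Set (Hgrp p) :=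
  {h : Hgrp p | h.perm ∈ C ∧ ∀ x : ZMod p, h.der x = φ (h.perm x) / φ x}

theorem Nat.factorization_factorial_self {p : ℕ} (hp : p.Prime) :
    p.factorial.factorization p = 1 := by
  simpa using Nat.factorization_factorial_mul (n := 1) hp

theorem Sylow.card_eq_of_factorization_card_eq_one {G : Type*} [Group G] [Finite G] {p : ℕ}
    [Fact p.Prime] (h : (Nat.card G).factorization p = 1) (P : Sylow p G) :
    Nat.card P = p := by
  rw [P.card_eq_multiplicity, h, pow_one]

theorem Equiv.Perm.exists_mem_apply_eq_of_card_eq {α : Type*} [Fintype α] {p : ℕ}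
    [Fact p.Prime] (hα : Fintype.card α = p) {C : Subgroup (Perm α)} (hC : Nat.card C = p)
    (x y : α) : ∃ f ∈ C, f x = y := by
  classical
  obtain ⟨g, hg⟩ := exists_prime_orderOf_dvd_card' (G := C) p hC.symm.dvd
  have hord : orderOf (g : Perm α) = Fintype.card α := by rw [Subgroup.orderOf_coe, hg, hα]
  have hcycle : (g : Perm α).IsCycle := isCycle_of_prime_order'' (hα ▸ Fact.out) hord
  have hsupport : (g : Perm α).support = Finset.univ :=
    Finset.eq_univ_of_card _ (hcycle.orderOf ▸ hord)
  have hmoved (z : α) : (g : Perm α) z ≠ z := mem_support.mp (hsupport ▸ Finset.mem_univ z)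
  obtain ⟨i, hi⟩ := hcycle.exists_zpow_eq (hmoved x) (hmoved y)
  exact ⟨_, zpow_mem g.2 i, hi⟩

namespace Hgrp

variable {p : ℕ}

variable (p) in
def equivProd : Hgrp p ≃ Equiv.Perm (ZMod p) × (ZMod p → (ZMod p)ˣ) where
  toFun h := (h.perm, h.der)
  invFun x := ⟨x.1, x.2⟩
  left_inv _ := rfl
  right_inv _ := rfl

instance [NeZero p] : Finite (Hgrp p) := .of_equiv _ (equivProd p).symm

variable (p) in
def permHom : Hgrp p →* Equiv.Perm (ZMod p) where
  toFun := perm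
  map_one' := rfl
  map_mul' _ _ := rfl

def coboundaryHom (φ : ZMod p → (ZMod p)ˣ) : Equiv.Perm (ZMod p) →* Hgrp p where
  toFun f := ⟨f, fun x => φ (f x) / φ x⟩
  map_one' := Hgrp.ext rfl (funext fun x => div_self' (φ x))
  map_mul' _ _ := Hgrp.ext rfl (funext fun _ => (div_mul_div_cancel _ _ _).symm)

theorem permHom_comp_coboundaryHom (φ : ZMod p → (ZMod p)ˣ) :
    (permHom p).comp (coboundaryHom φ) = MonoidHom.id _ := rfl

theorem coboundaryHom_injective (φ : ZMod p → (ZMod p)ˣ) :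
    Function.Injective (coboundaryHom φ) :=
  Function.LeftInverse.injective (g := permHom p) fun _ => rfl

theorem coboundaryHom_const_mul (k : (ZMod p)ˣ) (φ : ZMod p → (ZMod p)ˣ) :
    coboundaryHom (fun x => k * φ x) = coboundaryHom φ :=
  MonoidHom.ext fun _ => Hgrp.ext rfl (funext fun _ => mul_div_mul_left_eq_div _ _ _)

theorem conj_comp_coboundaryHom (h : Hgrp p) (φ : ZMod p → (ZMod p)ˣ) :
    (MulAut.conj h).toMonoidHom.comp (coboundaryHom φ) =
      (coboundaryHom fun x => h.der (h.perm⁻¹ x) * φ (h.perm⁻¹ x)).comp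
        (MulAut.conj h.perm).toMonoidHom := by
  refine MonoidHom.ext fun f => Hgrp.ext rfl (funext fun x => ?_)
  show h.der (f (h.perm⁻¹ x)) * (φ (f (h.perm⁻¹ x)) / φ (h.perm⁻¹ x)) *
      (h.der (h.perm⁻¹ x))⁻¹ =
    h.der (h.perm⁻¹ (h.perm (f (h.perm⁻¹ x)))) * φ (h.perm⁻¹ (h.perm (f (h.perm⁻¹ x)))) /
      (h.der (h.perm⁻¹ x) * φ (h.perm⁻¹ x))
  rw [Equiv.Perm.inv_def, Equiv.symm_apply_apply, mul_div_assoc', ← div_eq_mul_inv, div_div,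
    mul_comm (φ _)]

theorem map_coboundaryHom_eq_iff {C D : Subgroup (Equiv.Perm (ZMod p))}
    {φ ψ : ZMod p → (ZMod p)ˣ} (hC : ∀ x y, ∃ f ∈ C, f x = y) :
    C.map (coboundaryHom φ) = D.map (coboundaryHom ψ) ↔
      C = D ∧ ∃ k : (ZMod p)ˣ, ∀ x, φ x = k * ψ x := by
  constructor
  · intro h
    obtain rfl : C = D := by
      simpa only [Subgroup.map_map, permHom_comp_coboundaryHom, Subgroup.map_id] using
        congrArg (Subgroup.map (permHom p)) h
    refine ⟨rfl, φ 0 / ψ 0, fun x => ?_⟩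
    obtain ⟨f, hf, rfl⟩ := hC 0 x
    obtain ⟨g, -, hg⟩ : coboundaryHom φ f ∈ C.map (coboundaryHom ψ) :=
      h ▸ Subgroup.mem_map_of_mem _ hf
    rw [show g = f from congrArg perm hg] at hg
    have hder : φ (f 0) / φ 0 = ψ (f 0) / ψ 0 := congrArg (der · 0) hg.symm
    rwa [div_eq_div_iff_div_eq_div, div_eq_iff_eq_mul] at hder
  · rintro ⟨rfl, k, hk⟩
    rw [show φ = fun x => k * ψ x from funext hk, coboundaryHom_const_mul]

variable [Fact p.Prime]

theorem card_eq : Nat.card (Hgrp p) = p.factorial * (p - 1) ^ p := by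
  rw [Nat.card_congr (equivProd p), Nat.card_prod, Nat.card_perm, Nat.card_fun, Nat.card_zmod,
    Nat.card_eq_fintype_card (α := (ZMod p)ˣ), ZMod.card_units]

theorem factorization_card : (Nat.card (Hgrp p)).factorization p = 1 := by
  have hp : p.Prime := Fact.out
  have := hp.two_le
  rw [card_eq, Nat.factorization_mul (Nat.factorial_ne_zero p) (pow_ne_zero _ (by omega)),
    Finsupp.add_apply, Nat.factorization_factorial_self hp, Nat.factorization_pow,
    Finsupp.smul_apply, Nat.factorization_eq_zero_of_lt (by omega), smul_zero, add_zero]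

theorem exists_sylow_eq_map_coboundaryHom (P : Sylow p (Hgrp p)) :
    ∃ (C : Subgroup (Equiv.Perm (ZMod p))) (φ : ZMod p → (ZMod p)ˣ),
      Nat.card C = p ∧ (P : Subgroup (Hgrp p)) = C.map (coboundaryHom φ) := by
  obtain ⟨C₀⟩ : Nonempty (Sylow p (Equiv.Perm (ZMod p))) := inferInstance
  have hC₀ : Nat.card C₀ = p := C₀.card_eq_of_factorization_card_eq_one <| by
    rw [Nat.card_perm, Nat.card_zmod, Nat.factorization_factorial_self Fact.out]
  let P₀ : Sylow p (Hgrp p) := .ofCard ((C₀ : Subgroup _).map (coboundaryHom 1)) <| by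
    rw [Subgroup.card_map_of_injective (coboundaryHom_injective 1), hC₀, factorization_card,
      pow_one]
  obtain ⟨h, rfl⟩ := MulAction.exists_smul_eq (Hgrp p) P₀ P
  rw [Sylow.coe_subgroup_smul, Subgroup.pointwise_smul_def, Sylow.coe_ofCard]
  refine ⟨_, _, ?_, (Subgroup.map_map _ (MulAut.conj h).toMonoidHom _).trans <|
    (congrArg (Subgroup.map · C₀) (conj_comp_coboundaryHom h 1)).trans (Subgroup.map_map ..).symm⟩
  rw [Subgroup.card_map_of_injective (MulEquiv.injective _), hC₀]

end Hgrp

theorem sylowCandidate_eq_map {p : ℕ} (C : Subgroup (Equiv.Perm (ZMod p)))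
    (φ : ZMod p → (ZMod p)ˣ) :
    sylowCandidate p C φ = C.map (Hgrp.coboundaryHom φ) := by
  ext h
  constructor
  · rintro ⟨hC, hder⟩
    exact ⟨h.perm, hC, Hgrp.ext rfl (funext hder).symm⟩
  · rintro ⟨f, hf, rfl⟩
    exact ⟨hf, fun _ => rfl⟩

/-- For every cyclic subgroup `C` of order `p` of `Sym(ℤ/pℤ)` and every
`φ : ℤ/pℤ → ℤ/pℤ∖{0}`, the set `S_{(C,φ)}` is a Sylow `p`-subgroup of `H`;
every Sylow `p`-subgroup of `H` is of this form; and
`S_{(C,φ)} = S_{(D,ψ)}` if and only if `C = D` and `φ = k·ψ` for a nonzero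
constant `k`.  Hence the Sylow `p`-subgroups of `H` correspond bijectively to
pairs `(C, φ̄)` with `φ̄` the class of `φ` modulo nonzero constants. -/
theorem sylow_subgroups_of_H_description (p : ℕ) [Fact p.Prime] :
    (∀ (C : Subgroup (Equiv.Perm (ZMod p))) (φ : ZMod p → (ZMod p)ˣ),
      Nat.card C = p →
        ∃ P : Sylow p (Hgrp p),
          ((P : Subgroup (Hgrp p)) : Set (Hgrp p)) = sylowCandidate p C φ) ∧
    (∀ P : Sylow p (Hgrp p),
      ∃ (C : Subgroup (Equiv.Perm (ZMod p))) (φ : ZMod p → (ZMod p)ˣ),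
        Nat.card C = p ∧
        ((P : Subgroup (Hgrp p)) : Set (Hgrp p)) = sylowCandidate p C φ) ∧
    (∀ (C D : Subgroup (Equiv.Perm (ZMod p))) (φ ψ : ZMod p → (ZMod p)ˣ),
      Nat.card C = p → Nat.card D = p →
        (sylowCandidate p C φ = sylowCandidate p D ψ ↔
          C = D ∧ ∃ k : (ZMod p)ˣ, ∀ x : ZMod p, φ x = k * ψ x)) := by
  refine ⟨fun C φ hC => ?_, fun P => ?_, fun C D φ ψ hC _ => ?_⟩
  · refine ⟨.ofCard (C.map (Hgrp.coboundaryHom φ)) ?_, ?_⟩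
    · rw [Subgroup.card_map_of_injective (Hgrp.coboundaryHom_injective φ), hC,
        Hgrp.factorization_card, pow_one]
    · rw [Sylow.coe_ofCard, sylowCandidate_eq_map]
  · obtain ⟨C, φ, hC, hP⟩ := Hgrp.exists_sylow_eq_map_coboundaryHom P
    exact ⟨C, φ, hC, by rw [hP, sylowCandidate_eq_map]⟩
  · rw [sylowCandidate_eq_map, sylowCandidate_eq_map, SetLike.coe_set_eq]
    exact Hgrp.map_coboundaryHom_eq_iff
      (Equiv.Perm.exists_mem_apply_eq_of_card_eq (ZMod.card p) hC)
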